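/- Let A and B be groups with A nontrivial, and let G = A ∗ B be their free product with canonical inclusion ι_A : A → G. Then every element of G that commutes with every element of ι_A(A) lies in ι_A(A). In other words, the centralizer of ι_A(A) in G is contained in ι_A(A) (and hence equals the image of the center of A). -/

import Mathlib

/-!
Write the normal form of `g` as `a · u` with `a ∈ A` and `u` a reduced word whose first letter
is not in `A`. If `g` centralizes `A`, then `u · x = (a⁻¹ x a) · u` for every `x ∈ A`. When
`u ≠ 1` the left side still begins with the first letter of `u`, since right multiplication by
`A` only affects the last letter, whereas for `x ≠ 1` the right side begins with a letter of
`A`. Hence `u = 1` and `g = a`. The statement about right multiplication follows from the one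
about left multiplication by inverting reduced words.
-/

namespace Monoid.CoprodI.Word

variable {ι : Type*}

section Monoid

variable {M : ι → Type*} [∀ i, Monoid (M i)]

theorem eq_empty_of_fstIdx_eq_none {w : Word M} (h : w.fstIdx = none) : w = empty :=
  Word.ext <| by simpa [fstIdx] using h

def lastIdx (w : Word M) : Option ι :=
  w.toList.getLast?.map Sigma.fst

theorem lastIdx_cons {i} (m : M i) (w : Word M) (hmw : w.fstIdx ≠ some i) (h1 : m ≠ 1)
    (hw : w ≠ empty) : (cons m w hmw h1).lastIdx = w.lastIdx := by
  obtain ⟨_ | ⟨l, L⟩, _, _⟩ := w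
  · exact absurd rfl hw
  · simp [lastIdx, cons, List.getLast?_cons]

variable [∀ i, DecidableEq (M i)]

theorem lastIdx_rcons {i} (p : Pair M i) (h : p.tail ≠ empty) :
    (rcons p).lastIdx = p.tail.lastIdx := by
  unfold rcons
  split_ifs
  · rfl
  · exact lastIdx_cons _ _ _ _ h

theorem tail_ne_empty_of_lastIdx_rcons {i j} (hji : j ≠ i) {p : Pair M i}
    (hp : (rcons p).lastIdx = some j) : p.tail ≠ empty := by
  obtain ⟨m, T, hT⟩ := p
  rintro rfl
  unfold rcons at hp
  split_ifs at hp <;> simp [lastIdx, cons] at hp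
  exact hji hp.symm

variable [DecidableEq ι]

theorem lastIdx_of_smul {i j} (hji : j ≠ i) (m : M i) {w : Word M} (hw : w.lastIdx = some j) :
    (of m • w).lastIdx = some j := by
  rw [← (equivPair i).symm_apply_apply w, equivPair_symm] at hw
  have htail := tail_ne_empty_of_lastIdx_rcons hji hw
  rw [lastIdx_rcons _ htail] at hw
  rw [of_smul_def]
  exact (lastIdx_rcons ⟨m * (equivPair i w).head, _, (equivPair i w).fstIdx_ne⟩ htail).trans hw

theorem equiv_mul (x y : CoprodI M) : equiv (x * y) = x • equiv y :=
  mul_smul x y (empty : Word M)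

end Monoid

section Group

variable {G : ι → Type*} [∀ i, Group (G i)]

def inv (w : Word G) : Word G where
  toList := (w.toList.map fun l => ⟨l.1, l.2⁻¹⟩).reverse
  ne_one l hl := by
    obtain ⟨l', hl', rfl⟩ := List.mem_map.1 (List.mem_reverse.1 hl)
    exact inv_ne_one.2 (w.ne_one l' hl')
  chain_ne :=
    List.isChain_reverse.2 <| (List.isChain_map _).2 <| w.chain_ne.imp fun _ _ h => h.symm

theorem prod_inv (w : Word G) : w.inv.prod = w.prod⁻¹ := by
  simp [inv, prod, List.prod_inv_reverse, Function.comp_def]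

theorem fstIdx_inv (w : Word G) : w.inv.fstIdx = w.lastIdx := by
  simp [inv, fstIdx, lastIdx, List.head?_reverse, List.getLast?_map, Option.map_map,
    Function.comp_def]

variable [DecidableEq ι] [∀ i, DecidableEq (G i)]

theorem equiv_inv (x : CoprodI G) : equiv x⁻¹ = (equiv x).inv :=
  equiv.symm.injective <| by
    rw [Equiv.symm_apply_apply]
    exact (congrArg Inv.inv (equiv.symm_apply_apply x)).symm.trans (prod_inv _).symm

theorem fstIdx_equiv_mul_of {i j} (hji : j ≠ i) {x : CoprodI G} (hx : (equiv x).fstIdx = some j)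
    (m : G i) : (equiv (x * of m)).fstIdx = some j := by
  have : x * of m = (of m⁻¹ * x⁻¹)⁻¹ := by simp
  rw [this, equiv_inv, fstIdx_inv, equiv_mul]
  apply lastIdx_of_smul hji
  rwa [← fstIdx_inv, ← equiv_inv, inv_inv]

end Group

end Monoid.CoprodI.Word

namespace Monoid.CoprodI

open Word

variable {ι : Type*} {G : ι → Type*} [∀ i, Group (G i)]

theorem centralizer_range_of_le {i : ι} [Nontrivial (G i)] :
    Subgroup.centralizer ((of : G i →* CoprodI G).range : Set (CoprodI G)) ≤
      (of : G i →* CoprodI G).range := by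
  classical
  intro g hg
  set p := equivPair i (equiv g)
  have hg_eq : g = of p.head * p.tail.prod := by
    rw [← prod_rcons, ← equivPair_symm, Equiv.symm_apply_apply]
    exact (equiv.symm_apply_apply g).symm
  rcases htail : p.tail.fstIdx with _ | j
  · exact ⟨p.head, by rw [hg_eq, eq_empty_of_fstIdx_eq_none htail, prod_empty, mul_one]⟩
  exfalso
  have hji : j ≠ i := fun h => p.fstIdx_ne (h ▸ htail)
  obtain ⟨a, ha⟩ := exists_ne (1 : G i)
  set u := p.tail.prod
  set c := p.head⁻¹ * a * p.head
  have hu : equiv u = p.tail := equiv.apply_symm_apply _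
  have hc : c ≠ 1 := by simpa [c, mul_assoc, inv_mul_eq_one] using ha
  have hcomm : u * of a = of c * u := by
    have := Subgroup.mem_centralizer_iff.1 hg (of a) ⟨a, rfl⟩
    calc u * of a = (of p.head)⁻¹ * (g * of a) := by rw [hg_eq]; group
      _ = (of p.head)⁻¹ * (of a * g) := by rw [this]
      _ = of c * u := by rw [hg_eq]; simp only [c, map_mul, map_inv]; group
  have h1 := fstIdx_equiv_mul_of hji (hu ▸ htail) a
  have h2 : (equiv (of c * u)).fstIdx = some i := by
    rw [equiv_mul, hu, ← cons_eq_smul (h1 := p.fstIdx_ne) (h2 := hc), fstIdx_cons]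
  rw [hcomm, h2] at h1
  exact hji (Option.some_injective _ h1).symm

end Monoid.CoprodI

namespace Monoid.Coprod

universe u v

/-- `A ∗ B` is the free product of this family; lifting both factors to a common universe makes
the normal forms of `Monoid.CoprodI` available. -/
def boolFamily (A : Type u) (B : Type v) (b : Bool) : Type max u v :=
  cond b (ULift.{v} A) (ULift.{u} B)

variable {A : Type u} {B : Type v} [Group A] [Group B]

instance : ∀ b, Group (boolFamily A B b)
  | true => inferInstanceAs (Group (ULift A))
  | false => inferInstanceAs (Group (ULift B))

instance [Nontrivial A] : Nontrivial (boolFamily A B true) :=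
  inferInstanceAs (Nontrivial (ULift A))

def toCoprodI : A ∗ B →* CoprodI (boolFamily A B) :=
  lift (CoprodI.of.comp (MulEquiv.ulift.symm.toMonoidHom : A →* boolFamily A B true))
    (CoprodI.of.comp (MulEquiv.ulift.symm.toMonoidHom : B →* boolFamily A B false))

def ofCoprodI : CoprodI (boolFamily A B) →* A ∗ B :=
  CoprodI.lift fun
    | true => inl.comp MulEquiv.ulift.toMonoidHom
    | false => inr.comp MulEquiv.ulift.toMonoidHom

theorem toCoprodI_inl_down (a : boolFamily A B true) :
    toCoprodI (inl a.down : A ∗ B) = CoprodI.of a :=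
  lift_apply_inl _ _ a.down

theorem ofCoprodI_of_true (a : boolFamily A B true) : ofCoprodI (CoprodI.of a) = inl a.down :=
  CoprodI.lift_of _ a

theorem ofCoprodI_toCoprodI (g : A ∗ B) : ofCoprodI (toCoprodI g) = g := by
  show (ofCoprodI.comp toCoprodI) g = MonoidHom.id _ g
  congr 1
  ext <;> rfl

end Monoid.Coprod

/-- Let `A` and `B` be groups with `A` nontrivial, and `G = A ∗ B` their free product
with canonical inclusion `ι_A : A → G`. Then the centralizer of `ι_A(A)` in `G` is
contained in `ι_A(A)`. -/
theorem stmt11 {A B : Type*} [Group A] [Group B] [Nontrivial A] :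
    Subgroup.centralizer
        (((Monoid.Coprod.inl : A →* Monoid.Coprod A B).range : Subgroup (Monoid.Coprod A B)) :
          Set (Monoid.Coprod A B)) ≤
      (Monoid.Coprod.inl : A →* Monoid.Coprod A B).range := by
  intro g hg
  have hcomm : Monoid.Coprod.toCoprodI g ∈ Subgroup.centralizer
      ((Monoid.CoprodI.of : Monoid.Coprod.boolFamily A B true →* _).range : Set _) := by
    refine Subgroup.mem_centralizer_iff.2 ?_
    rintro _ ⟨a, rfl⟩
    rw [← Monoid.Coprod.toCoprodI_inl_down a, ← map_mul, ← map_mul,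
      Subgroup.mem_centralizer_iff.1 hg _ ⟨a.down, rfl⟩]
  obtain ⟨a, ha⟩ := Monoid.CoprodI.centralizer_range_of_le hcomm
  refine ⟨a.down, ?_⟩
  rw [← Monoid.Coprod.ofCoprodI_of_true, ha, Monoid.Coprod.ofCoprodI_toCoprodI]
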